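/- arXiv:1509.03515 — 3 statements merged into one kernel-verified Lean document; each statement's English description precedes it below -/
import Mathlib

section
/- The map (a,b,c,d) ↦ (bc/(ab+ac), b, c, d(b+c)) on quadruples of positive reals, viewed in logarithmic coordinates (log a, log b, log c, log d) ↦ (log(bc/(ab+ac)), log b, log c, log(d(b+c))), has Jacobian determinant equal to ±1. -/
/-!
In logarithmic coordinates the move factors as `x ↦ R (x + L x • (e₀ + e₃))` with
`L x = log (exp x₁ + exp x₂)` and `R` the linear reflection `y ↦ (y₁ + y₂ - y₀, y₁, y₂, y₃)`.
The derivative of the inner map is the transvection `id + dL ⊗ (e₀ + e₃)`, whose determinant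
is `1 + dL (e₀ + e₃) = 1` because `L` does not depend on `x₀` and `x₃`; and `det R = -1`.
-/

/-- The gRSK local move `(a,b,c,d) ↦ (bc/(ab+ac), b, c, d(b+c))` viewed in
logarithmic coordinates. -/
noncomputable def localMoveLog (x : Fin 4 → ℝ) : Fin 4 → ℝ :=
  ![Real.log (Real.exp (x 1) * Real.exp (x 2) /
      (Real.exp (x 0) * Real.exp (x 1) + Real.exp (x 0) * Real.exp (x 2))),
    Real.log (Real.exp (x 1)),
    Real.log (Real.exp (x 2)),
    Real.log (Real.exp (x 3) * (Real.exp (x 1) + Real.exp (x 2)))]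

theorem HasFDerivAt.apply_eq_zero_of_forall_add_smul_eq {𝕜 E F : Type*}
    [NontriviallyNormedField 𝕜] [NormedAddCommGroup E] [NormedSpace 𝕜 E]
    [NormedAddCommGroup F] [NormedSpace 𝕜 F] {f : E → F} {f' : E →L[𝕜] F} {x v : E}
    (hf : HasFDerivAt f f' x) (hv : ∀ t : 𝕜, f (x + t • v) = f x) : f' v = 0 := by
  have hconst : HasLineDerivAt 𝕜 f 0 x v := by
    simp only [HasLineDerivAt, hv, hasDerivAt_const]
  exact (hf.hasLineDerivAt v).unique hconst

theorem ContinuousLinearMap.det_id_add_smulRight {𝕜 E : Type*} [NontriviallyNormedField 𝕜]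
    [NormedAddCommGroup E] [NormedSpace 𝕜 E] [FiniteDimensional 𝕜 E] (f : E →L[𝕜] 𝕜) (v : E) :
    LinearMap.det (ContinuousLinearMap.id 𝕜 E + f.smulRight v).toLinearMap = 1 + f v := by
  have htransvection : (ContinuousLinearMap.id 𝕜 E + f.smulRight v).toLinearMap =
      LinearMap.transvection f.toLinearMap v := by
    ext
    simp [LinearMap.transvection]
  rw [htransvection, LinearMap.transvection.det]
  rfl

noncomputable def localMoveReflection : (Fin 4 → ℝ) →L[ℝ] (Fin 4 → ℝ) :=
  LinearMap.toContinuousLinearMap <| Matrix.toLin'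
    !![-1, 1, 1, 0; 0, 1, 0, 0; 0, 0, 1, 0; 0, 0, 0, 1]

theorem det_localMoveReflection : LinearMap.det localMoveReflection.toLinearMap = -1 := by
  rw [localMoveReflection, LinearMap.coe_toContinuousLinearMap, LinearMap.det_toLin']
  simp [Matrix.det_succ_row_zero, Fin.sum_univ_succ]

noncomputable def logSumExp₁₂ (x : Fin 4 → ℝ) : ℝ :=
  Real.log (Real.exp (x 1) + Real.exp (x 2))

theorem differentiableAt_logSumExp₁₂ (x : Fin 4 → ℝ) : DifferentiableAt ℝ logSumExp₁₂ x := by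
  unfold logSumExp₁₂
  fun_prop (disch := positivity)

theorem fderiv_logSumExp₁₂_apply_eq_zero (x : Fin 4 → ℝ) :
    fderiv ℝ logSumExp₁₂ x ![1, 0, 0, 1] = 0 :=
  (differentiableAt_logSumExp₁₂ x).hasFDerivAt.apply_eq_zero_of_forall_add_smul_eq fun t => by
    simp [logSumExp₁₂]

theorem localMoveLog_eq_reflection_comp_shear :
    localMoveLog = fun x => localMoveReflection (x + logSumExp₁₂ x • ![1, 0, 0, 1]) := by
  funext x i
  have hsum : Real.exp (x 1) + Real.exp (x 2) ≠ 0 := by positivity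
  fin_cases i <;>
    simp [localMoveLog, localMoveReflection, logSumExp₁₂, Matrix.mulVec, dotProduct,
      Fin.sum_univ_four, Matrix.vecHead, Matrix.vecTail, ← mul_add, Real.log_mul, Real.log_div,
      hsum]
  ring

theorem det_fderiv_localMoveLog (x : Fin 4 → ℝ) :
    LinearMap.det (fderiv ℝ localMoveLog x).toLinearMap = -1 := by
  set v : Fin 4 → ℝ := ![1, 0, 0, 1]
  have hshear : HasFDerivAt (fun y => y + logSumExp₁₂ y • v)
      (ContinuousLinearMap.id ℝ _ + (fderiv ℝ logSumExp₁₂ x).smulRight v) x :=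
    (hasFDerivAt_id x).add ((differentiableAt_logSumExp₁₂ x).hasFDerivAt.smul_const v)
  have hmove : HasFDerivAt localMoveLog (localMoveReflection.comp
      (ContinuousLinearMap.id ℝ _ + (fderiv ℝ logSumExp₁₂ x).smulRight v)) x :=
    localMoveLog_eq_reflection_comp_shear ▸ localMoveReflection.hasFDerivAt.comp x hshear
  rw [hmove.fderiv, ContinuousLinearMap.toLinearMap_comp, LinearMap.det_comp,
    det_localMoveReflection, ContinuousLinearMap.det_id_add_smulRight,
    fderiv_logSumExp₁₂_apply_eq_zero]
  norm_num

/-- The local move, in logarithmic coordinates, has Jacobian determinant `±1`. -/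
theorem localMove_jacobian_pm_one (x : Fin 4 → ℝ) :
    |LinearMap.det (fderiv ℝ localMoveLog x).toLinearMap| = 1 := by
  simp [det_fderiv_localMoveLog]
end

section
/- For any n×n matrix W with positive real entries, the geometric RSK image T = gRSK(W) satisfies t_{n,n} = Σ_{π} Π_{(i,j)∈π} w_{ij}, where the sum is over all down-right lattice paths π from (1,1) to (n,n). -/
/-- The geometric RSK local move `l_{ij}` acting on an array of positive reals
(1-based indexing).  For `i,j ≥ 2` it replaces the 2×2 submatrix
`(a b; c d)` with corners `(i-1,j-1)` and `(i,j)` by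
`(bc/(a(b+c)), b; c, d(b+c))`; the boundary moves `l_{i1}`, `l_{1j}` multiply
`x_{i1}` by `x_{i-1,1}` and `x_{1j}` by `x_{1,j-1}`, and `l_{11}` is the identity. -/
noncomputable def lmove (i j : ℕ) (X : ℕ → ℕ → ℝ) : ℕ → ℕ → ℝ :=
  if i = 1 ∧ j = 1 then X
  else if i = 1 then
    fun p q => if p = 1 ∧ q = j then X 1 (j - 1) * X 1 j else X p q
  else if j = 1 then
    fun p q => if p = i ∧ q = 1 then X (i - 1) 1 * X i 1 else X p q
  else
    fun p q =>
      if p = i - 1 ∧ q = j - 1 then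
        X (i - 1) j * X i (j - 1) /
          (X (i - 1) (j - 1) * (X (i - 1) j + X i (j - 1)))
      else if p = i ∧ q = j then X i j * (X (i - 1) j + X i (j - 1))
      else X p q

/-- `π^j_i = l_{ij} ∘ ⋯ ∘ l_{i1}`. -/
noncomputable def piMove (i j : ℕ) (X : ℕ → ℕ → ℝ) : ℕ → ℕ → ℝ :=
  (List.range j).foldl (fun Y k => lmove i (k + 1) Y) X

/-- `R_i = π^{m-i+1}_1 ∘ ⋯ ∘ π^m_i` (for `i ≤ m`), resp.
`R_i = π^1_{i-m+1} ∘ ⋯ ∘ π^m_i` (for `i ≥ m`): insertion of the `i`-th row of an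
array with `m` columns. -/
noncomputable def Rmove (m i : ℕ) (X : ℕ → ℕ → ℝ) : ℕ → ℕ → ℝ :=
  (List.range (min i m)).foldl (fun Y k => piMove (i - k) (m - k) Y) X

/-- gRSK on an `n × m` array: `gRSK = R_n ∘ ⋯ ∘ R_1`. -/
noncomputable def gRSK (n m : ℕ) (X : ℕ → ℕ → ℝ) : ℕ → ℕ → ℝ :=
  (List.range n).foldl (fun Y k => Rmove m (k + 1) Y) X

/-- `ρ^i_j = l_{1,j-i+1} ∘ ⋯ ∘ l_{i-1,j-1} ∘ l_{ij}` for `i ≤ j`, resp.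
`ρ^i_j = l_{i-j+1,1} ∘ ⋯ ∘ l_{i-1,j-1} ∘ l_{ij}` for `i ≥ j`. -/
noncomputable def rhoMove (i j : ℕ) (X : ℕ → ℕ → ℝ) : ℕ → ℕ → ℝ :=
  (List.range (min i j)).foldl (fun Y k => lmove (i - k) (j - k) Y) X

/-- One time step of geometric PNG: `ρ^1_t ∘ ⋯ ∘ ρ^t_1`. -/
noncomputable def pngStage (t : ℕ) (X : ℕ → ℕ → ℝ) : ℕ → ℕ → ℝ :=
  (List.range t).foldl (fun Y k => rhoMove (t - k) (1 + k) Y) X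

/-- Geometric PNG on the triangular array `(w_{ij} : i+j-1 ≤ n)`:
`gPNG = (ρ^1_n ∘ ⋯ ∘ ρ^n_1) ∘ ⋯ ∘ (ρ^1_2 ∘ ρ^2_1) ∘ ρ^1_1`. -/
noncomputable def gPNG (n : ℕ) (X : ℕ → ℕ → ℝ) : ℕ → ℕ → ℝ :=
  (List.range n).foldl (fun Y t => pngStage (t + 1) Y) X

/-- The weight of the down-right lattice path from `(1,1)` to `(p,q)` encoded by
the sequence of steps `s` (`true` = down, i.e. increase the first index): the
product of the entries of `w` along the path. -/
noncomputable def pathWeight (w : ℕ → ℕ → ℝ) (p q : ℕ) (s : Fin (p + q - 2) → Bool) : ℝ :=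
  ∏ k ∈ Finset.range (p + q - 1),
    w (1 + ((List.ofFn s).take k).count true)
      (1 + (k - ((List.ofFn s).take k).count true))

/-- The point-to-point polymer partition function
`Z_{p,q} = Σ_{π : (1,1) → (p,q) down-right} Π_{(i,j) ∈ π} w_{ij}`,
the sum running over all down-right lattice paths from `(1,1)` to `(p,q)`. -/
noncomputable def partitionFn (w : ℕ → ℕ → ℝ) (p q : ℕ) : ℝ :=
  ∑ s ∈ Finset.univ.filter
      (fun s : Fin (p + q - 2) → Bool => (List.ofFn s).count true = p - 1),
    pathWeight w p q s

/-! Splitting a down-right path at its last step gives the polymer recursion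
`Z_{p,q} = w_{pq} (Z_{p-1,q} + Z_{p,q-1})`, with one-term versions along the first row and
column. On the gRSK side, `R_r` touches rows `≤ r` only, and after its first sweep `π^m_r` has
reached column `q` the entry `(r,q)` is never changed again. That sweep rewrites row `r` from left
to right as `x_{rq} ↦ x_{rq} (x_{r-1,q} + x'_{r,q-1})`, with `x'_{r,q-1}` the entry it has just
produced, which is the polymer recursion. By induction on `r`, row `r` of `R_r ∘ ⋯ ∘ R_1 (W)` is
therefore `Z_{r,·}`. -/

section PartitionFunction

variable (w : ℕ → ℕ → ℝ)

theorem Fin.sum_pi_snoc {α M : Type*} [Fintype α] [AddCommMonoid M] {m : ℕ}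
    (G : (Fin (m + 1) → α) → M) : ∑ s, G s = ∑ s : Fin m → α, ∑ a, G (Fin.snoc s a) := by
  rw [← Fintype.sum_equiv (Fin.snocEquiv fun _ => α) (fun x => G (Fin.snoc x.2 x.1)) G
    fun _ => rfl, Fintype.sum_prod_type_right]

theorem List.ofFn_snoc {α : Type*} {m : ℕ} (s : Fin m → α) (a : α) :
    List.ofFn (Fin.snoc s a : Fin (m + 1) → α) = List.ofFn s ++ [a] := by
  rw [List.ofFn_succ']
  simp

def stepsWeight (l : List Bool) : ℝ :=
  ∏ k ∈ Finset.range (l.length + 1),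
    w (1 + (l.take k).count true) (1 + (k - (l.take k).count true))

theorem pathWeight_eq_stepsWeight {p q : ℕ} (hpq : 2 ≤ p + q) (s : Fin (p + q - 2) → Bool) :
    pathWeight w p q s = stepsWeight w (List.ofFn s) := by
  rw [pathWeight, stepsWeight, List.length_ofFn, show p + q - 2 + 1 = p + q - 1 by omega]

theorem stepsWeight_concat (l : List Bool) (b : Bool) :
    stepsWeight w (l ++ [b]) = stepsWeight w l *
      w (1 + (l ++ [b]).count true) (l.length + 2 - (l ++ [b]).count true) := by
  have hcount : (l ++ [b]).count true ≤ l.length + 1 := by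
    simpa using List.count_le_length (a := true) (l := l ++ [b])
  rw [stepsWeight, List.length_append, List.length_singleton, Finset.prod_range_succ,
    List.take_of_length_le (by simp)]
  congr 1
  · refine Finset.prod_congr rfl fun k hk => ?_
    rw [List.take_append_of_le_length (by simp at hk; omega)]
  · congr 1
    omega

def stepsPartitionFn (m c : ℕ) : ℝ :=
  ∑ s : Fin m → Bool with (List.ofFn s).count true = c, stepsWeight w (List.ofFn s)

theorem partitionFn_eq_stepsPartitionFn {p q : ℕ} (hpq : 2 ≤ p + q) :
    partitionFn w p q = stepsPartitionFn w (p + q - 2) (p - 1) :=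
  Finset.sum_congr rfl fun s _ => pathWeight_eq_stepsWeight w hpq s

theorem stepsPartitionFn_of_lt {m c : ℕ} (h : m < c) : stepsPartitionFn w m c = 0 := by
  refine Finset.sum_eq_zero fun s hs => absurd (Finset.mem_filter.1 hs).2 ?_
  have := List.count_le_length (a := true) (l := List.ofFn s)
  rw [List.length_ofFn] at this
  omega

theorem stepsPartitionFn_succ (m c : ℕ) :
    stepsPartitionFn w (m + 1) c = w (1 + c) (m + 2 - c) *
      ((∑ s : Fin m → Bool with (List.ofFn s).count true + 1 = c, stepsWeight w (List.ofFn s))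
        + stepsPartitionFn w m c) := by
  simp only [stepsPartitionFn, Finset.sum_filter, Fin.sum_pi_snoc, Fintype.sum_bool, mul_add,
    Finset.mul_sum, ← Finset.sum_add_distrib]
  refine Finset.sum_congr rfl fun s _ => ?_
  simp only [List.ofFn_snoc, stepsWeight_concat, List.count_append, List.length_ofFn]
  split_ifs <;> simp_all [add_comm, mul_comm]

theorem stepsPartitionFn_succ_zero (m : ℕ) :
    stepsPartitionFn w (m + 1) 0 = w 1 (m + 2) * stepsPartitionFn w m 0 := by
  simp [stepsPartitionFn_succ]

theorem stepsPartitionFn_succ_succ (m c : ℕ) :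
    stepsPartitionFn w (m + 1) (c + 1) =
      w (c + 2) (m + 1 - c) * (stepsPartitionFn w m c + stepsPartitionFn w m (c + 1)) := by
  rw [stepsPartitionFn_succ, show 1 + (c + 1) = c + 2 by omega,
    show m + 2 - (c + 1) = m + 1 - c by omega]
  simp only [Nat.add_right_cancel_iff]
  rfl

theorem partitionFn_one_one : partitionFn w 1 1 = w 1 1 := by
  simp [partitionFn, pathWeight]

theorem partitionFn_succ_succ_eq (c d : ℕ) :
    partitionFn w (c + 1) (d + 1) = stepsPartitionFn w (c + d) c := by
  rw [partitionFn_eq_stepsPartitionFn w (by omega), show c + 1 + (d + 1) - 2 = c + d by omega,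
    Nat.add_sub_cancel]

theorem partitionFn_one_succ {q : ℕ} (hq : 1 ≤ q) :
    partitionFn w 1 (q + 1) = w 1 (q + 1) * partitionFn w 1 q := by
  obtain ⟨d, rfl⟩ := Nat.exists_eq_add_of_le' hq
  rw [partitionFn_succ_succ_eq, partitionFn_succ_succ_eq]
  simpa using stepsPartitionFn_succ_zero w d

theorem partitionFn_succ_one {p : ℕ} (hp : 1 ≤ p) :
    partitionFn w (p + 1) 1 = w (p + 1) 1 * partitionFn w p 1 := by
  obtain ⟨c, rfl⟩ := Nat.exists_eq_add_of_le' hp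
  rw [partitionFn_succ_succ_eq, partitionFn_succ_succ_eq]
  simpa [stepsPartitionFn_of_lt] using stepsPartitionFn_succ_succ w c c

theorem partitionFn_succ_succ {p q : ℕ} (hp : 1 ≤ p) (hq : 1 ≤ q) :
    partitionFn w (p + 1) (q + 1) =
      w (p + 1) (q + 1) * (partitionFn w p (q + 1) + partitionFn w (p + 1) q) := by
  obtain ⟨c, rfl⟩ := Nat.exists_eq_add_of_le' hp
  obtain ⟨d, rfl⟩ := Nat.exists_eq_add_of_le' hq
  simp only [partitionFn_succ_succ_eq]
  have h := stepsPartitionFn_succ_succ w (c + d + 1) c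
  rw [show c + d + 1 + 1 - c = d + 1 + 1 by omega] at h
  ring_nf at h ⊢
  exact h

end PartitionFunction

section LocalMoves

variable (X : ℕ → ℕ → ℝ)

theorem lmove_apply_of_ne {i j p q : ℕ} (h : ¬(p = i ∧ q = j)) (h' : ¬(p = i - 1 ∧ q = j - 1)) :
    lmove i j X p q = X p q := by
  unfold lmove
  split_ifs <;> dsimp only <;> split_ifs <;> first | rfl | omega

theorem lmove_one_apply_one {j : ℕ} (hj : 2 ≤ j) : lmove 1 j X 1 j = X 1 (j - 1) * X 1 j := by
  rw [lmove, if_neg (by omega), if_pos rfl]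
  exact if_pos ⟨rfl, rfl⟩

theorem lmove_apply_one {i : ℕ} (hi : 2 ≤ i) : lmove i 1 X i 1 = X (i - 1) 1 * X i 1 := by
  rw [lmove, if_neg (by omega), if_neg (by omega), if_pos rfl]
  exact if_pos ⟨rfl, rfl⟩

theorem lmove_apply_self {i j : ℕ} (hi : 2 ≤ i) (hj : 2 ≤ j) :
    lmove i j X i j = X i j * (X (i - 1) j + X i (j - 1)) := by
  rw [lmove, if_neg (by omega), if_neg (by omega), if_neg (by omega), if_neg (by omega),
    if_pos ⟨rfl, rfl⟩]

theorem lmove_one_one : lmove 1 1 X = X := if_pos ⟨rfl, rfl⟩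

theorem piMove_succ (i j : ℕ) : piMove i (j + 1) X = lmove i (j + 1) (piMove i j X) := by
  rw [piMove, List.range_succ, List.foldl_append]
  rfl

theorem piMove_apply_of_ne {i p : ℕ} (j q : ℕ) (h : p ≠ i) (h' : p ≠ i - 1) :
    piMove i j X p q = X p q := by
  induction j with
  | zero => rfl
  | succ j ih => rw [piMove_succ, lmove_apply_of_ne _ (by omega) (by omega), ih]

theorem piMove_apply_of_lt {i j q : ℕ} (hi : 1 ≤ i) (hq : j < q) : piMove i j X i q = X i q := by
  induction j with
  | zero => rfl
  | succ j ih => rw [piMove_succ, lmove_apply_of_ne _ (by omega) (by omega), ih (by omega)]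

theorem piMove_apply_sub_one_of_le {i j q : ℕ} (hi : 1 ≤ i) (hq : j ≤ q) :
    piMove i j X (i - 1) q = X (i - 1) q := by
  induction j with
  | zero => rfl
  | succ j ih => rw [piMove_succ, lmove_apply_of_ne _ (by omega) (by omega), ih (by omega)]

theorem piMove_apply_self_of_le {i j q : ℕ} (hi : 1 ≤ i) (hq : q ≤ j) :
    piMove i j X i q = piMove i q X i q := by
  induction j, hq using Nat.le_induction with
  | base => rfl
  | succ j _ ih => rw [piMove_succ, lmove_apply_of_ne _ (by omega) (by omega), ih]

theorem piMove_one_one_apply : piMove 1 1 X 1 1 = X 1 1 := by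
  rw [piMove_succ, lmove_one_one]
  rfl

theorem piMove_one_succ_apply {q : ℕ} (hq : 1 ≤ q) :
    piMove 1 (q + 1) X 1 (q + 1) = piMove 1 q X 1 q * X 1 (q + 1) := by
  rw [piMove_succ, lmove_one_apply_one _ (by omega), Nat.add_sub_cancel,
    piMove_apply_of_lt _ le_rfl q.lt_succ_self]

theorem piMove_one_apply {i : ℕ} (hi : 2 ≤ i) : piMove i 1 X i 1 = X (i - 1) 1 * X i 1 := by
  rw [piMove_succ, lmove_apply_one _ hi]
  rfl

theorem piMove_succ_apply_self {i q : ℕ} (hi : 2 ≤ i) (hq : 1 ≤ q) :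
    piMove i (q + 1) X i (q + 1) = X i (q + 1) * (X (i - 1) (q + 1) + piMove i q X i q) := by
  rw [piMove_succ, lmove_apply_self _ hi (by omega), Nat.add_sub_cancel,
    piMove_apply_of_lt _ (by omega) q.lt_succ_self,
    piMove_apply_sub_one_of_le _ (by omega) q.le_succ]

theorem foldl_piMove_apply_of_lt (f g : ℕ → ℕ) {p : ℕ} (q s : ℕ) (h : ∀ k < s, f k < p) :
    (List.range s).foldl (fun Y k => piMove (f k) (g k) Y) X p q = X p q := by
  induction s with
  | zero => rfl
  | succ s ih =>
    have hs := h s s.lt_succ_self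
    rw [List.range_succ, List.foldl_append, List.foldl_cons, List.foldl_nil,
      piMove_apply_of_ne _ _ _ (by omega) (by omega), ih fun k hk => h k (by omega)]

theorem Rmove_apply_of_lt {i p : ℕ} (m q : ℕ) (hp : i < p) : Rmove m i X p q = X p q :=
  foldl_piMove_apply_of_lt X _ _ q _ fun _ _ => by omega

theorem Rmove_apply_self {i : ℕ} (m q : ℕ) (hi : 1 ≤ i) : Rmove m i X i q = piMove i m X i q := by
  rcases Nat.eq_zero_or_pos m with rfl | hm
  · simp [Rmove, piMove]
  · obtain ⟨s, hs⟩ : ∃ s, min i m = s + 1 := ⟨min i m - 1, by omega⟩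
    rw [Rmove, hs, List.range_succ_eq_map, List.foldl_cons, List.foldl_map, Nat.sub_zero,
      Nat.sub_zero]
    exact foldl_piMove_apply_of_lt _ _ _ q s fun _ _ => by omega

theorem gRSK_zero (m : ℕ) : gRSK 0 m X = X := rfl

theorem gRSK_succ (n m : ℕ) : gRSK (n + 1) m X = Rmove m (n + 1) (gRSK n m X) := by
  rw [gRSK, List.range_succ, List.foldl_append]
  rfl

theorem gRSK_apply_of_lt {n p : ℕ} (m q : ℕ) (hp : n < p) : gRSK n m X p q = X p q := by
  induction n with
  | zero => rfl
  | succ n ih => rw [gRSK_succ, Rmove_apply_of_lt _ _ _ hp, ih (by omega)]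

end LocalMoves

section RowInsertion

variable (W : ℕ → ℕ → ℝ)

theorem piMove_one_apply_self_eq_partitionFn {q : ℕ} (hq : 1 ≤ q) :
    piMove 1 q W 1 q = partitionFn W 1 q := by
  induction q, hq using Nat.le_induction with
  | base => rw [piMove_one_one_apply, partitionFn_one_one]
  | succ q hq ih => rw [piMove_one_succ_apply _ hq, ih, partitionFn_one_succ _ hq, mul_comm]

theorem piMove_succ_apply_self_eq_partitionFn {r m : ℕ} (hr : 1 ≤ r) (A : ℕ → ℕ → ℝ)
    (hZ : ∀ q, 1 ≤ q → q ≤ m → A r q = partitionFn W r q) (hW : ∀ q, A (r + 1) q = W (r + 1) q)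
    {q : ℕ} (hq : 1 ≤ q) (hqm : q ≤ m) :
    piMove (r + 1) q A (r + 1) q = partitionFn W (r + 1) q := by
  induction q, hq using Nat.le_induction with
  | base =>
    rw [piMove_one_apply _ (by omega), Nat.add_sub_cancel, hZ 1 le_rfl hqm, hW,
      partitionFn_succ_one _ hr, mul_comm]
  | succ q hq ih =>
    rw [piMove_succ_apply_self _ (by omega) hq, Nat.add_sub_cancel, hW, hZ _ (by omega) hqm,
      ih (by omega), partitionFn_succ_succ _ hr hq]

theorem gRSK_apply_self {r m q : ℕ} (hr : 1 ≤ r) (hq : 1 ≤ q) (hqm : q ≤ m) :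
    gRSK r m W r q = partitionFn W r q := by
  induction r, hr using Nat.le_induction generalizing q with
  | base =>
    rw [gRSK_succ, gRSK_zero, Rmove_apply_self _ _ _ le_rfl, piMove_apply_self_of_le _ le_rfl hqm,
      piMove_one_apply_self_eq_partitionFn _ hq]
  | succ r hr ih =>
    rw [gRSK_succ, Rmove_apply_self _ _ _ (by omega), piMove_apply_self_of_le _ (by omega) hqm]
    exact piMove_succ_apply_self_eq_partitionFn W hr _ (fun _ => ih)
      (fun q => gRSK_apply_of_lt W m q r.lt_succ_self) hq hqm

end RowInsertion

theorem gRSK_corner_eq_partitionFn_general (n : ℕ) (hn : 1 ≤ n) (W : ℕ → ℕ → ℝ) :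
    gRSK n n W n n = partitionFn W n n :=
  gRSK_apply_self W hn hn le_rfl

/-- For an `n×n` positive matrix `W`, the bottom-right entry of `gRSK(W)` equals
the polymer partition function `Z_{n,n}`, the sum over all down-right paths from
`(1,1)` to `(n,n)` of the products of the entries along the path. -/
theorem gRSK_corner_eq_partitionFn (n : ℕ) (hn : 1 ≤ n) (W : ℕ → ℕ → ℝ)
    (hW : ∀ i j, 1 ≤ i → i ≤ n → 1 ≤ j → j ≤ n → 0 < W i j) :
    gRSK n n W n n = partitionFn W n n :=
  gRSK_corner_eq_partitionFn_general n hn W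
end

section
/- For sequences of complex numbers (w_i), (v_i), (𝗐_i), (𝗏_i) and γ > 0 with Re(w_i), Re(𝗐_i), Re(v_i), Re(𝗏_i) < γ/2, Re(w_i − v_j) > 0 and Re(𝗐_i − 𝗏_j) > 0 for all i,j, the following identity holds: det(1/(w_k − v_ℓ))_{n×n} · det(1/(𝗐_k − 𝗏_ℓ))_{m×m} · Π_{k=1}^n Π_{ℓ=1}^m [(γ−𝗐_ℓ−v_k)(γ−𝗏_ℓ−w_k)] / [(γ−𝗐_ℓ−w_k)(γ−𝗏_ℓ−v_k)] = ∫_{(0,∞)^{n+m}} det M(x) dx_1⋯dx_{n+m}, where M(x) is the (n+m)×(n+m) block matrix with blocks (e^{−x_j(w_i−v_j)})_{n×n}, (−e^{−x_{j+n}(γ−w_i−𝗐_j)})_{n×m}, (e^{−x_j(γ−𝗏_i−v_j)})_{m×n}, (e^{−x_{j+n}(𝗐_j−w_i)})_{m×m}. -/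
/-!
Column `q` of `M(x)` depends only on `x_q`, so expanding the determinant over permutations and
applying Fubini turns the integral of `det M(x)` into the determinant of the entrywise integrals.
Since `∫₀^∞ e^{-tc} dt = 1/c`, that is the Cauchy matrix `(1/(a_p - b_q))` for the concatenated
sequences `a = (w, γ - 𝗏)` and `b = (v, γ - 𝗐)`. Cauchy's product formula for its determinant
splits along the blocks into the two smaller Cauchy determinants times the cross factors.
-/

open MeasureTheory Set Finset

theorem Fin.prod_prod_Ioi_add {M : Type*} [CommMonoid M] {n m : ℕ}
    (f : Fin (n + m) → Fin (n + m) → M) :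
    ∏ i, ∏ j ∈ Ioi i, f i j =
      (∏ i : Fin n, ∏ j ∈ Ioi i, f (castAdd m i) (castAdd m j)) *
        (∏ i : Fin n, ∏ j : Fin m, f (castAdd m i) (natAdd n j)) *
          ∏ i : Fin m, ∏ j ∈ Ioi i, f (natAdd n i) (natAdd n j) := by
  have h₁₁ (i j : Fin n) : castAdd m i < castAdd m j ↔ i < j := by
    simp only [Fin.lt_def, val_castAdd]
  have h₁₂ (i : Fin n) (j : Fin m) : castAdd m i < natAdd n j := by
    simp only [Fin.lt_def, val_castAdd, val_natAdd]; omega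
  have h₂₁ (i : Fin m) (j : Fin n) : ¬natAdd n i < castAdd m j := by
    simp only [Fin.lt_def, val_castAdd, val_natAdd]; omega
  simp only [← filter_lt_eq_Ioi, prod_filter, Fin.prod_univ_add, h₁₁, natAdd_lt_natAdd_iff, h₁₂,
    h₂₁, if_true, if_false, prod_const_one, one_mul, prod_mul_distrib, mul_assoc]

namespace Matrix

variable {K : Type*} [Field K]

theorem cauchy_schur_entry {a₀ b₀ x y : K} (hx : x ≠ b₀) (hy : a₀ ≠ y) (hxy : x ≠ y) :
    (x - y)⁻¹ - (a₀ - b₀) / (x - b₀) * (a₀ - y)⁻¹ =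
      (a₀ - x) / (x - b₀) * (x - y)⁻¹ * ((y - b₀) / (a₀ - y)) := by
  rw [← sub_ne_zero] at hx hy hxy
  field_simp
  ring

/-- Clearing column `0` with row `0` leaves, as Schur complement, the smaller Cauchy matrix
scaled by a diagonal matrix on each side. -/
theorem det_cauchy_succ {k : ℕ} (a b : Fin (k + 1) → K) (h : ∀ i j, a i ≠ b j) :
    (of fun i j => (a i - b j)⁻¹).det =
      (a 0 - b 0)⁻¹ * (∏ i : Fin k, (a 0 - a i.succ) / (a i.succ - b 0)) *
        (∏ j : Fin k, (b j.succ - b 0) / (a 0 - b j.succ)) *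
          (of fun i j : Fin k => (a i.succ - b j.succ)⁻¹).det := by
  set r : Fin (k + 1) → K := fun i => if i = 0 then 0 else (a 0 - b 0) / (a i - b 0)
  set M : Matrix (Fin (k + 1)) (Fin (k + 1)) K :=
    of fun i j => (a i - b j)⁻¹ - r i * (a 0 - b j)⁻¹
  have hM : (of fun i j => (a i - b j)⁻¹).det = M.det :=
    det_eq_of_forall_row_eq_smul_add_const r 0 (by simp [r]) fun i j => by simp [M, r]
  have hM_col (i : Fin k) : M i.succ 0 = 0 := by
    simp only [M, r, of_apply, Fin.succ_ne_zero, if_false]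
    rw [div_eq_inv_mul, mul_inv_cancel_right₀ (sub_ne_zero.2 (h 0 0)), sub_self]
  have hM_sub : M.submatrix Fin.succ Fin.succ =
      diagonal (fun i => (a 0 - a i.succ) / (a i.succ - b 0)) *
        (of fun i j => (a i.succ - b j.succ)⁻¹) *
          diagonal (fun j => (b j.succ - b 0) / (a 0 - b j.succ)) := by
    ext i j
    simpa [M, r] using cauchy_schur_entry (h i.succ 0) (h 0 j.succ) (h i.succ j.succ)
  rw [hM, det_succ_column_zero, Fin.sum_univ_succ]
  simp only [hM_col, mul_zero, zero_mul, sum_const_zero, add_zero, Fin.succAbove_zero, hM_sub,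
    det_mul, det_diagonal, M, r, of_apply, ↓reduceIte, sub_zero, Fin.val_zero, pow_zero,
    one_mul]
  ring

theorem det_cauchy : ∀ {k : ℕ} (a b : Fin k → K), (∀ i j, a i ≠ b j) →
    (of fun i j => (a i - b j)⁻¹).det =
      (∏ i, ∏ j ∈ Ioi i, (a j - a i) * (b i - b j)) / ∏ i, ∏ j, (a i - b j)
  | 0, _, _, _ => by simp
  | k + 1, a, b, h => by
    rw [det_cauchy_succ a b h,
      det_cauchy (fun i => a i.succ) (fun j => b j.succ) fun i j => h _ _]
    have hswap : ∏ j : Fin k, (a j.succ - a 0) * (b 0 - b j.succ) =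
        ∏ j : Fin k, (a 0 - a j.succ) * (b j.succ - b 0) :=
      prod_congr rfl fun _ _ => by ring
    simp only [Fin.prod_univ_succ (fun i => ∏ j ∈ Ioi i, _), Fin.prod_Ioi_zero,
      Fin.prod_Ioi_succ, hswap]
    simp only [Fin.prod_univ_succ, div_eq_mul_inv, prod_mul_distrib, prod_inv_distrib, mul_inv]
    ring

theorem det_cauchy_sumElim {n m : ℕ} (a₁ b₁ : Fin n → K) (a₂ b₂ : Fin m → K)
    (h : ∀ p q, Sum.elim a₁ a₂ p ≠ Sum.elim b₁ b₂ q) :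
    (of fun p q => (Sum.elim a₁ a₂ p - Sum.elim b₁ b₂ q)⁻¹).det =
      (of fun i j => (a₁ i - b₁ j)⁻¹).det * (of fun i j => (a₂ i - b₂ j)⁻¹).det *
        ∏ i, ∏ j, (b₂ j - b₁ i) * (a₂ j - a₁ i) / ((b₂ j - a₁ i) * (a₂ j - b₁ i)) := by
  have hcross (i j) : (b₂ j - b₁ i) * (a₂ j - a₁ i) / ((b₂ j - a₁ i) * (a₂ j - b₁ i)) =
      (a₂ j - a₁ i) * (b₁ i - b₂ j) / ((a₁ i - b₂ j) * (a₂ j - b₁ i)) := by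
    rw [← neg_div_neg_eq]; congr 1 <;> ring
  set e : Fin (n + m) ≃ Fin n ⊕ Fin m := finSumFinEquiv.symm
  rw [← det_submatrix_equiv_self e]
  simp only [submatrix, of_apply, hcross]
  rw [det_cauchy _ _ fun i j => h (e i) (e j), det_cauchy a₁ b₁ fun i j => h (.inl i) (.inl j),
    det_cauchy a₂ b₂ fun i j => h (.inr i) (.inr j), Fin.prod_prod_Ioi_add]
  simp only [Fin.prod_univ_add, e, finSumFinEquiv_symm_apply_castAdd,
    finSumFinEquiv_symm_apply_natAdd, Sum.elim_inl, Sum.elim_inr, prod_div_distrib,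
    prod_mul_distrib]
  rw [prod_comm (s := (univ : Finset (Fin m))) (t := (univ : Finset (Fin n)))]
  simp only [div_eq_mul_inv, mul_inv]
  ring

theorem integral_det_eq_det_integral {ι α 𝕜 : Type*} [Fintype ι] [DecidableEq ι] [RCLike 𝕜]
    [MeasurableSpace α] (μ : Measure α) [SigmaFinite μ] (M : (ι → α) → Matrix ι ι 𝕜)
    (hM : ∀ x i j, M x i j = M (fun _ => x j) i j)
    (hint : ∀ i j, Integrable (fun t => M (fun _ => t) i j) μ) :
    ∫ x, (M x).det ∂Measure.pi (fun _ => μ) = (of fun i j => ∫ t, M (fun _ => t) i j ∂μ).det := by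
  have hM_det (x : ι → α) : (M x).det = (of fun i j => M (fun _ => x j) i j).det :=
    congrArg det (ext (hM x))
  simp only [hM_det, det_apply, of_apply, Units.smul_def, zsmul_eq_mul]
  rw [integral_finsetSum _ fun σ _ => (Integrable.fintype_prod fun j => hint (σ j) j).const_mul _]
  refine sum_congr rfl fun σ _ => ?_
  rw [integral_const_mul, integral_fintype_prod_eq_prod (fun j t => M (fun _ => t) (σ j) j)]

end Matrix

theorem integrableOn_cexp_neg_mul_Ioi {c : ℂ} (hc : 0 < c.re) :
    IntegrableOn (fun t : ℝ => Complex.exp (-(t : ℂ) * c)) (Ioi 0) := by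
  simpa [mul_comm] using integrableOn_exp_mul_complex_Ioi (a := -c) (by simpa) 0

theorem integral_cexp_neg_mul_Ioi {c : ℂ} (hc : 0 < c.re) :
    ∫ t in Ioi (0 : ℝ), Complex.exp (-(t : ℂ) * c) = c⁻¹ := by
  simpa [mul_comm] using integral_exp_mul_complex_Ioi (a := -c) (by simpa) 0

section ExpBlockMatrix

variable {n m : ℕ}

/-- The matrix `M(x)`. -/
noncomputable def expBlockMatrix (γ : ℝ) (w v : Fin n → ℂ) (ww vv : Fin m → ℂ)
    (x : Fin n ⊕ Fin m → ℝ) : Matrix (Fin n ⊕ Fin m) (Fin n ⊕ Fin m) ℂ :=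
  Matrix.fromBlocks
    (Matrix.of fun i j : Fin n => Complex.exp (-(x (Sum.inl j) : ℂ) * (w i - v j)))
    (Matrix.of fun (i : Fin n) (j : Fin m) =>
      -Complex.exp (-(x (Sum.inr j) : ℂ) * ((γ : ℂ) - w i - ww j)))
    (Matrix.of fun (i : Fin m) (j : Fin n) =>
      Complex.exp (-(x (Sum.inl j) : ℂ) * ((γ : ℂ) - vv i - v j)))
    (Matrix.of fun i j : Fin m => Complex.exp (-(x (Sum.inr j) : ℂ) * (ww j - vv i)))

variable {γ : ℝ} {w v : Fin n → ℂ} {ww vv : Fin m → ℂ}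

theorem expBlockMatrix_apply_eq_const (x : Fin n ⊕ Fin m → ℝ) (p q : Fin n ⊕ Fin m) :
    expBlockMatrix γ w v ww vv x p q = expBlockMatrix γ w v ww vv (fun _ => x q) p q := by
  rcases p with i | i <;> rcases q with j | j <;> rfl

theorem integrableOn_expBlockMatrix (h₁₁ : ∀ i j, 0 < (w i - v j).re)
    (h₁₂ : ∀ i j, 0 < ((γ : ℂ) - w i - ww j).re) (h₂₁ : ∀ i j, 0 < ((γ : ℂ) - vv i - v j).re)
    (h₂₂ : ∀ i j, 0 < (ww i - vv j).re) (p q : Fin n ⊕ Fin m) :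
    IntegrableOn (fun t : ℝ => expBlockMatrix γ w v ww vv (fun _ => t) p q) (Ioi 0) := by
  rcases p with i | i <;> rcases q with j | j
  · exact integrableOn_cexp_neg_mul_Ioi (h₁₁ i j)
  · exact (integrableOn_cexp_neg_mul_Ioi (h₁₂ i j)).neg
  · exact integrableOn_cexp_neg_mul_Ioi (h₂₁ i j)
  · exact integrableOn_cexp_neg_mul_Ioi (h₂₂ j i)

theorem integral_expBlockMatrix (h₁₁ : ∀ i j, 0 < (w i - v j).re)
    (h₁₂ : ∀ i j, 0 < ((γ : ℂ) - w i - ww j).re) (h₂₁ : ∀ i j, 0 < ((γ : ℂ) - vv i - v j).re)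
    (h₂₂ : ∀ i j, 0 < (ww i - vv j).re) (p q : Fin n ⊕ Fin m) :
    ∫ t in Ioi (0 : ℝ), expBlockMatrix γ w v ww vv (fun _ => t) p q =
      (Sum.elim w (fun i => γ - vv i) p - Sum.elim v (fun j => γ - ww j) q)⁻¹ := by
  rcases p with i | i <;> rcases q with j | j
  · exact integral_cexp_neg_mul_Ioi (h₁₁ i j)
  · simp only [expBlockMatrix, Matrix.fromBlocks_apply₁₂, Matrix.of_apply, integral_neg,
      integral_cexp_neg_mul_Ioi (h₁₂ i j), Sum.elim_inl, Sum.elim_inr, ← inv_neg]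
    congr 1
    ring
  · exact integral_cexp_neg_mul_Ioi (h₂₁ i j)
  · simp only [expBlockMatrix, Matrix.fromBlocks_apply₂₂, Matrix.of_apply,
      integral_cexp_neg_mul_Ioi (h₂₂ j i), Sum.elim_inr, sub_sub_sub_cancel_left]

end ExpBlockMatrix

theorem block_cauchy_integral_general (n m : ℕ) (γ : ℝ)
    (w v : Fin n → ℂ) (ww vv : Fin m → ℂ)
    (hw : ∀ i, (w i).re < γ / 2) (hv : ∀ i, (v i).re < γ / 2)
    (hww : ∀ i, (ww i).re < γ / 2) (hvv : ∀ i, (vv i).re < γ / 2)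
    (hwv : ∀ i j, 0 < (w i - v j).re) (hwwvv : ∀ i j, 0 < (ww i - vv j).re) :
    (Matrix.of fun k l : Fin n => (w k - v l)⁻¹).det *
        (Matrix.of fun k l : Fin m => (ww k - vv l)⁻¹).det *
        ∏ k : Fin n, ∏ l : Fin m,
          (((γ : ℂ) - ww l - v k) * ((γ : ℂ) - vv l - w k)) /
            ((((γ : ℂ) - ww l - w k)) * (((γ : ℂ) - vv l - v k)))
      = ∫ x in Set.univ.pi fun _ : Fin n ⊕ Fin m => Set.Ioi (0 : ℝ),
          (Matrix.fromBlocks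
            (Matrix.of fun i j : Fin n =>
              Complex.exp (-(x (Sum.inl j) : ℂ) * (w i - v j)))
            (Matrix.of fun (i : Fin n) (j : Fin m) =>
              -Complex.exp (-(x (Sum.inr j) : ℂ) * ((γ : ℂ) - w i - ww j)))
            (Matrix.of fun (i : Fin m) (j : Fin n) =>
              Complex.exp (-(x (Sum.inl j) : ℂ) * ((γ : ℂ) - vv i - v j)))
            (Matrix.of fun i j : Fin m =>
              Complex.exp (-(x (Sum.inr j) : ℂ) * (ww j - vv i)))).det := by
  have h₁₂ : ∀ i j, 0 < ((γ : ℂ) - w i - ww j).re := fun i j => by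
    simp only [Complex.sub_re, Complex.ofReal_re]; linarith [hw i, hww j]
  have h₂₁ : ∀ i j, 0 < ((γ : ℂ) - vv i - v j).re := fun i j => by
    simp only [Complex.sub_re, Complex.ofReal_re]; linarith [hvv i, hv j]
  have hab : ∀ p q, Sum.elim w (fun i => (γ : ℂ) - vv i) p ≠ Sum.elim v (fun j => γ - ww j) q := by
    rintro (i | i) (j | j) h <;> simp only [Sum.elim_inl, Sum.elim_inr] at h
    · exact (hwv i j).ne' (by simp [h])
    · exact (h₁₂ i j).ne' (by simp [h])
    · exact (h₂₁ i j).ne' (by simp [h])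
    · exact (hwwvv j i).ne' (by simp [sub_right_inj.1 h])
  show _ = ∫ x in _, (expBlockMatrix γ w v ww vv x).det
  rw [volume_pi, Measure.restrict_pi_pi, Matrix.integral_det_eq_det_integral _ _
    expBlockMatrix_apply_eq_const (integrableOn_expBlockMatrix hwv h₁₂ h₂₁ hwwvv)]
  simp_rw [integral_expBlockMatrix hwv h₁₂ h₂₁ hwwvv]
  rw [Matrix.det_cauchy_sumElim _ _ _ _ hab,
    ← Matrix.det_transpose (Matrix.of fun i j : Fin m => (ww i - vv j)⁻¹)]
  congr 3
  ext i j
  simp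

/-- The block Cauchy identity with exponential-integral representation:
for complex sequences `w, v` (length `n`) and `𝗐, 𝗏` (length `m`) with real
parts `< γ/2` and `Re(w_i − v_j) > 0`, `Re(𝗐_i − 𝗏_j) > 0`, the product of the
two Cauchy determinants times the cross term equals the integral over
`(0,∞)^{n+m}` of the determinant of the exponential block matrix. -/
theorem block_cauchy_integral (n m : ℕ) (γ : ℝ) (hγ : 0 < γ)
    (w v : Fin n → ℂ) (ww vv : Fin m → ℂ)
    (hw : ∀ i, (w i).re < γ / 2) (hv : ∀ i, (v i).re < γ / 2)
    (hww : ∀ i, (ww i).re < γ / 2) (hvv : ∀ i, (vv i).re < γ / 2)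
    (hwv : ∀ i j, 0 < (w i - v j).re) (hwwvv : ∀ i j, 0 < (ww i - vv j).re) :
    (Matrix.of fun k l : Fin n => (w k - v l)⁻¹).det *
        (Matrix.of fun k l : Fin m => (ww k - vv l)⁻¹).det *
        ∏ k : Fin n, ∏ l : Fin m,
          (((γ : ℂ) - ww l - v k) * ((γ : ℂ) - vv l - w k)) /
            ((((γ : ℂ) - ww l - w k)) * (((γ : ℂ) - vv l - v k)))
      = ∫ x in Set.univ.pi fun _ : Fin n ⊕ Fin m => Set.Ioi (0 : ℝ),
          (Matrix.fromBlocks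
            (Matrix.of fun i j : Fin n =>
              Complex.exp (-(x (Sum.inl j) : ℂ) * (w i - v j)))
            (Matrix.of fun (i : Fin n) (j : Fin m) =>
              -Complex.exp (-(x (Sum.inr j) : ℂ) * ((γ : ℂ) - w i - ww j)))
            (Matrix.of fun (i : Fin m) (j : Fin n) =>
              Complex.exp (-(x (Sum.inl j) : ℂ) * ((γ : ℂ) - vv i - v j)))
            (Matrix.of fun i j : Fin m =>
              Complex.exp (-(x (Sum.inr j) : ℂ) * (ww j - vv i)))).det :=
  block_cauchy_integral_general n m γ w v ww vv hw hv hww hvv hwv hwwvv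
end
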